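/- Let G be a totally disconnected locally compact group, α a continuous endomorphism of G, and U⁽¹⁾, U⁽²⁾ compact open subgroups of G, each tidy for α. Set V = U⁽¹⁾ ∩ U⁽²⁾, k_i = [U⁽ⁱ⁾ : V] and d_i = [U⁽ⁱ⁾ : U⁽ⁱ⁾ ∩ α⁻¹(U⁽ⁱ⁾)] for i ∈ {1,2}. Then for all n ≥ 0 and i ∈ {1,2}: k_i · d_iⁿ ≥ [V : V ∩ α^{-n}(V)] and k_i · [V : V ∩ α^{-n}(V)] ≥ d_iⁿ. Moreover, if the set {α^{-i}(V) : i ∈ ℕ} of preimages is finite, then d₁ = 1 = d₂. -/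

import Mathlib

open Pointwise Subgroup Filter

set_option linter.unusedSectionVars false

variable {G : Type*}

/-- The `n`-fold iterate of an endomorphism `α : G →* G`, as a monoid homomorphism. -/
def iterHom [Group G] (α : G →* G) : ℕ → G →* G
  | 0 => MonoidHom.id G
  | n + 1 => α.comp (iterHom α n)

/-- The descending sequence `U_0 = U`, `U_{n+1} = U ⊓ α(U_n)`. -/
def seqU [Group G] (α : G →* G) (U : Subgroup G) : ℕ → Subgroup G
  | 0 => U
  | n + 1 => U ⊓ Subgroup.map α (seqU α U n)

/-- `U₊ = ⋂ₙ Uₙ`. -/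
def Uplus [Group G] (α : G →* G) (U : Subgroup G) : Subgroup G := ⨅ n, seqU α U n

/-- `U₋ = ⋂ₙ α^{-n}(U)`. -/
def Uminus [Group G] (α : G →* G) (U : Subgroup G) : Subgroup G :=
  ⨅ n, Subgroup.comap (iterHom α n) U

/-- `U₊₊ = ⋃ₙ αⁿ(U₊)` as a subset of `G`. -/
def Upp [Group G] (α : G →* G) (U : Subgroup G) : Set G :=
  ⋃ n, iterHom α n '' (Uplus α U : Set G)

/-- `U₋₋ = ⋃ₙ α^{-n}(U₋)` as a subset of `G`. -/
def Umm [Group G] (α : G →* G) (U : Subgroup G) : Set G :=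
  ⋃ n, iterHom α n ⁻¹' (Uminus α U : Set G)

/-- `U₋ₙ = ⋂_{k=0}^{n} α^{-k}(U)`. -/
def Uneg [Group G] (α : G →* G) (U : Subgroup G) (n : ℕ) : Subgroup G :=
  ⨅ k ∈ Finset.range (n + 1), Subgroup.comap (iterHom α k) U

/-- `U` is tidy above for `α` if `U = U₊U₋`. -/
def TidyAbove [Group G] (α : G →* G) (U : Subgroup G) : Prop :=
  (U : Set G) = (Uplus α U : Set G) * (Uminus α U : Set G)

/-- `U` is tidy below for `α` if `U₋₋` is closed. -/
def TidyBelow [Group G] [TopologicalSpace G] (α : G →* G) (U : Subgroup G) : Prop :=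
  IsClosed (Umm α U)

/-- `U` is tidy for `α` if it is tidy above and tidy below for `α`. -/
def Tidy [Group G] [TopologicalSpace G] (α : G →* G) (U : Subgroup G) : Prop :=
  TidyAbove α U ∧ TidyBelow α U

/-- The scale of `α`: the minimum of `[α(V) : α(V) ∩ V]` over compact open subgroups `V`. -/
noncomputable def scale [Group G] [TopologicalSpace G] (α : G →* G) : ℕ :=
  sInf {n : ℕ | ∃ V : Subgroup G, IsCompact (V : Set G) ∧ IsOpen (V : Set G) ∧
    n = Subgroup.relIndex V (Subgroup.map α V)}

/-! ### Basic properties of `iterHom` -/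

section Basics
variable [Group G] (α : G →* G)

lemma iterHom_zero : iterHom α 0 = MonoidHom.id G := rfl

lemma iterHom_zero_apply (x : G) : iterHom α 0 x = x := rfl

lemma iterHom_one : iterHom α 1 = α := by
  show α.comp (MonoidHom.id G) = α
  exact α.comp_id

lemma iterHom_succ_apply (n : ℕ) (x : G) : iterHom α (n + 1) x = α (iterHom α n x) := rfl

lemma iterHom_succ' (n : ℕ) : iterHom α (n + 1) = (iterHom α n).comp α := by
  induction n with
  | zero => show α.comp (MonoidHom.id G) = (MonoidHom.id G).comp α; ext x; rfl
  | succ n ih =>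
      show α.comp (iterHom α (n + 1)) = (α.comp (iterHom α n)).comp α
      rw [ih]; rfl

lemma iterHom_succ_apply' (n : ℕ) (x : G) : iterHom α (n + 1) x = iterHom α n (α x) := by
  rw [iterHom_succ']; rfl

lemma iterHom_add_apply (a b : ℕ) (x : G) :
    iterHom α (a + b) x = iterHom α a (iterHom α b x) := by
  induction a with
  | zero => simp [Nat.zero_add, iterHom_zero_apply]
  | succ a ih =>
      have : a + 1 + b = (a + b) + 1 := by omega
      rw [this, iterHom_succ_apply, ih, iterHom_succ_apply]

variable [TopologicalSpace G]

lemma continuous_iterHom (hα : Continuous α) (n : ℕ) : Continuous (iterHom α n) := by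
  induction n with
  | zero => exact continuous_id
  | succ n ih => exact hα.comp ih

end Basics

/-! ### Basic properties of `U₊`, `U₋`, `U₋₋` -/

section SeqU
variable [Group G] {α : G →* G} {U : Subgroup G}

lemma seqU_le (n : ℕ) : seqU α U n ≤ U := by
  cases n with
  | zero => exact le_rfl
  | succ n => exact inf_le_left

lemma seqU_succ_le (n : ℕ) : seqU α U (n + 1) ≤ seqU α U n := by
  induction n with
  | zero => exact inf_le_left
  | succ n ih => exact inf_le_inf le_rfl (Subgroup.map_mono ih)

lemma Uplus_le : Uplus α U ≤ U := (iInf_le _ 0).trans (seqU_le 0)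

lemma Uplus_le_seqU (n : ℕ) : Uplus α U ≤ seqU α U n := iInf_le _ n

lemma mem_Uplus {x : G} : x ∈ Uplus α U ↔ ∀ n, x ∈ seqU α U n := Subgroup.mem_iInf

lemma Uplus_mem_of {y : G} (hy : y ∈ U) (h : ∃ t ∈ Uplus α U, α t = y) :
    y ∈ Uplus α U := by
  obtain ⟨t, ht, rfl⟩ := h
  rw [mem_Uplus]
  intro n
  cases n with
  | zero => exact hy
  | succ n =>
      exact ⟨hy, Subgroup.mem_map.2 ⟨t, (mem_Uplus.1 ht) n, rfl⟩⟩

lemma mem_Uminus {x : G} : x ∈ Uminus α U ↔ ∀ n, iterHom α n x ∈ U := by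
  simp [Uminus, Subgroup.mem_iInf, Subgroup.mem_comap]

lemma Uminus_le : Uminus α U ≤ U := fun x hx => by
  have := mem_Uminus.1 hx 0; rwa [iterHom_zero_apply] at this

lemma Uminus_le_comap (k : ℕ) : Uminus α U ≤ Subgroup.comap (iterHom α k) U := iInf_le _ k

lemma alpha_mem_Uminus {x : G} (hx : x ∈ Uminus α U) : α x ∈ Uminus α U := by
  rw [mem_Uminus]
  intro n
  rw [← iterHom_succ_apply']
  exact mem_Uminus.1 hx (n + 1)

lemma iter_mem_Uminus {x : G} (hx : x ∈ Uminus α U) (k : ℕ) :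
    iterHom α k x ∈ Uminus α U := by
  induction k with
  | zero => rwa [iterHom_zero_apply]
  | succ k ih => rw [iterHom_succ_apply]; exact alpha_mem_Uminus ih

lemma mem_Umm_of {x : G} (k : ℕ) (h : iterHom α k x ∈ Uminus α U) : x ∈ Umm α U :=
  Set.mem_iUnion.2 ⟨k, h⟩

lemma one_mem_Umm : (1 : G) ∈ Umm α U :=
  mem_Umm_of 0 (by rw [map_one]; exact Subgroup.one_mem _)

variable [TopologicalSpace G] [IsTopologicalGroup G] [T2Space G]

lemma seqU_isCompact (hα : Continuous α) (hc : IsCompact (U : Set G)) (n : ℕ) :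
    IsCompact (seqU α U n : Set G) := by
  induction n with
  | zero => exact hc
  | succ n ih =>
      show IsCompact ((U ⊓ Subgroup.map α (seqU α U n) : Subgroup G) : Set G)
      rw [Subgroup.coe_inf]
      refine hc.inter_right ?_
      rw [Subgroup.coe_map]
      exact (ih.image hα).isClosed

lemma coe_Uplus : (Uplus α U : Set G) = ⋂ n, (seqU α U n : Set G) := Subgroup.coe_iInf

lemma Uplus_isCompact (hα : Continuous α) (hc : IsCompact (U : Set G)) :
    IsCompact (Uplus α U : Set G) := by
  refine IsCompact.of_isClosed_subset hc ?_ Uplus_le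
  rw [coe_Uplus]
  exact isClosed_iInter fun n => (seqU_isCompact hα hc n).isClosed

/-- `U₊ ⊆ α(U₊)`: every element of `U₊` has a preimage in `U₊` (uses compactness). -/
lemma Uplus_surj (hα : Continuous α) (hc : IsCompact (U : Set G)) :
    ∀ x ∈ Uplus α U, ∃ y ∈ Uplus α U, α y = x := by
  intro x hx
  set K : ℕ → Set G := fun n => (seqU α U n : Set G) ∩ α ⁻¹' {x} with hK
  have h1 : ∀ n, K (n + 1) ⊆ K n := fun n =>
    Set.inter_subset_inter (seqU_succ_le n) le_rfl
  have h2 : ∀ n, (K n).Nonempty := by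
    intro n
    have hx' : x ∈ seqU α U (n + 1) := Uplus_le_seqU (n + 1) hx
    obtain ⟨y, hy, hyx⟩ := Subgroup.mem_map.1 hx'.2
    exact ⟨y, hy, by simp [hyx]⟩
  have h3 : IsCompact (K 0) :=
    hc.inter_right (isClosed_singleton.preimage hα)
  have h4 : ∀ n, IsClosed (K n) := fun n =>
    ((seqU_isCompact hα hc n).isClosed).inter (isClosed_singleton.preimage hα)
  obtain ⟨y, hy⟩ := IsCompact.nonempty_iInter_of_sequence_nonempty_isCompact_isClosed K h1 h2 h3 h4
  simp only [Set.mem_iInter, hK, Set.mem_inter_iff, Set.mem_preimage, Set.mem_singleton_iff] at hy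
  exact ⟨y, mem_Uplus.2 fun n => (hy n).1, (hy 0).2⟩

lemma Uminus_isClosed (hα : Continuous α) (hcl : IsClosed (U : Set G)) :
    IsClosed (Uminus α U : Set G) := by
  have : (Uminus α U : Set G) = ⋂ n, iterHom α n ⁻¹' (U : Set G) := by
    ext x; simp [mem_Uminus, Set.mem_iInter, SetLike.mem_coe]
  rw [this]
  exact isClosed_iInter fun n => hcl.preimage (continuous_iterHom α hα n)

end SeqU

/-! ### The Baire category consequence of tidiness below -/

section Fact1
variable [Group G] [TopologicalSpace G] [IsTopologicalGroup G] [T2Space G]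
variable {α : G →* G} {U : Subgroup G}

lemma Umm_mono_pre {x : G} {a b : ℕ} (hab : a ≤ b) (h : iterHom α a x ∈ Uminus α U) :
    iterHom α b x ∈ Uminus α U := by
  obtain ⟨c, rfl⟩ := Nat.exists_eq_add_of_le hab
  rw [Nat.add_comm a c, iterHom_add_apply]
  exact iter_mem_Uminus h c

/-- The subgroup with carrier `U ∩ U₋₋`. -/
def Lgrp (α : G →* G) (U : Subgroup G) : Subgroup G where
  carrier := (U : Set G) ∩ Umm α U
  one_mem' := ⟨U.one_mem, one_mem_Umm⟩
  mul_mem' := by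
    rintro x y ⟨hxU, hxM⟩ ⟨hyU, hyM⟩
    obtain ⟨a, ha⟩ := Set.mem_iUnion.1 hxM
    obtain ⟨b, hb⟩ := Set.mem_iUnion.1 hyM
    refine ⟨U.mul_mem hxU hyU, mem_Umm_of (a + b) ?_⟩
    rw [map_mul]
    exact Subgroup.mul_mem _ (Umm_mono_pre (Nat.le_add_right a b) ha)
      (Umm_mono_pre (Nat.le_add_left b a) hb)
  inv_mem' := by
    rintro x ⟨hxU, hxM⟩
    obtain ⟨a, ha⟩ := Set.mem_iUnion.1 hxM
    refine ⟨U.inv_mem hxU, mem_Umm_of a ?_⟩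
    rw [map_inv]
    exact Subgroup.inv_mem _ ha

/-- Key consequence of `U₋₋` being closed (tidy below): there is a uniform `m₀` such
that every element of `U ∩ U₋₋` is mapped into `U₋` by `α^{m₀}`. -/
lemma fact1 (hα : Continuous α) (hc : IsCompact (U : Set G)) (hTB : TidyBelow α U) :
    ∃ m₀ : ℕ, ∀ x : G, x ∈ U → x ∈ Umm α U → iterHom α m₀ x ∈ Uminus α U := by
  classical
  set L : Subgroup G := Lgrp α U with hL
  have hLcarrier : (L : Set G) = (U : Set G) ∩ Umm α U := rfl
  have hLclosed : IsClosed (L : Set G) := by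
    rw [hLcarrier]; exact hc.isClosed.inter hTB
  have hLcompact : IsCompact (L : Set G) :=
    hc.of_isClosed_subset hLclosed (by rw [hLcarrier]; exact Set.inter_subset_left)
  haveI : CompactSpace L := isCompact_iff_compactSpace.mp hLcompact
  set Hm : ℕ → Subgroup L := fun m => (Subgroup.comap (iterHom α m) (Uminus α U)).subgroupOf L
    with hHm
  have hHmono : ∀ {a b : ℕ}, a ≤ b → Hm a ≤ Hm b := by
    intro a b hab x hx
    exact Umm_mono_pre hab hx
  have hHclosed : ∀ m, IsClosed (Hm m : Set L) := by
    intro m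
    have : (Hm m : Set L) =
        (Subtype.val : L → G) ⁻¹' (iterHom α m ⁻¹' (Uminus α U : Set G)) := rfl
    rw [this]
    exact ((Uminus_isClosed hα hc.isClosed).preimage (continuous_iterHom α hα m)).preimage
      continuous_subtype_val
  have hHcover : (⋃ m, (Hm m : Set L)) = Set.univ := by
    ext x
    simp only [Set.mem_iUnion, Set.mem_univ, iff_true]
    have hxM : (x : G) ∈ Umm α U := x.2.2
    obtain ⟨m, hm⟩ := Set.mem_iUnion.1 hxM
    exact ⟨m, hm⟩
  obtain ⟨m, hm⟩ := nonempty_interior_of_iUnion_of_closed hHclosed hHcover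
  obtain ⟨x, hx⟩ := hm
  have hopen : IsOpen (Hm m : Set L) :=
    Subgroup.isOpen_of_mem_nhds (Hm m) (mem_interior_iff_mem_nhds.1 hx)
  haveI : Finite (L ⧸ Hm m) := Subgroup.quotient_finite_of_isOpen (Hm m) hopen
  have hrep : ∀ q : L ⧸ Hm m, ∃ y : L, (QuotientGroup.mk y : L ⧸ Hm m) = q ∧ ∃ j, y ∈ Hm j := by
    intro q
    obtain ⟨y, hy⟩ := Quotient.exists_rep q
    have hy2 : y ∈ ⋃ j, (Hm j : Set L) := by rw [hHcover]; trivial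
    obtain ⟨j, hj⟩ := Set.mem_iUnion.1 hy2
    exact ⟨y, hy, j, hj⟩
  choose rep hrepq idx hidx using hrep
  have hbdd : ∃ N, ∀ q : L ⧸ Hm m, idx q ≤ N := by
    obtain ⟨N, hN⟩ := (Set.finite_range idx).bddAbove
    exact ⟨N, fun q => hN ⟨q, rfl⟩⟩
  obtain ⟨N, hN⟩ := hbdd
  refine ⟨max N m, ?_⟩
  intro x hxU hxM
  set xl : L := ⟨x, hxU, hxM⟩ with hxl
  set q : L ⧸ Hm m := QuotientGroup.mk xl with hq
  have h1 : rep q ∈ Hm (max N m) := hHmono (le_trans (hN q) (le_max_left N m)) (hidx q)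
  have h2 : (rep q)⁻¹ * xl ∈ Hm m := by
    rw [← QuotientGroup.eq]
    exact hrepq q
  have h2' : (rep q)⁻¹ * xl ∈ Hm (max N m) := hHmono (le_max_right N m) h2
  have h3 : xl ∈ Hm (max N m) := by
    have := (Hm (max N m)).mul_mem h1 h2'
    rwa [mul_inv_cancel_left] at this
  exact h3

end Fact1

/-! ### The no-escape lemma -/

section NoEscape
variable [Group G] [TopologicalSpace G] [IsTopologicalGroup G] [T2Space G]
variable {α : G →* G} {U : Subgroup G}

/-- Key lemma: if `u ∈ U₊` and some positive iterate of `u` lies in `U`,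
then `α u ∈ U`. -/
lemma no_escape (hα : Continuous α) (hc : IsCompact (U : Set G))
    (hTA : TidyAbove α U) (hTB : TidyBelow α U)
    {u : G} (hu : u ∈ Uplus α U) {n : ℕ} (hw : iterHom α (n + 1) u ∈ U) :
    α u ∈ U := by
  classical
  obtain ⟨m₀, hm₀⟩ := fact1 hα hc hTB
  have hsur := Uplus_surj (α := α) (U := U) hα hc
  set T := Uplus α U with hT
  let F : {x : G // x ∈ T} → {x : G // x ∈ T} := fun x =>
    ⟨(hsur x.1 x.2).choose, (hsur x.1 x.2).choose_spec.1⟩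
  have hF : ∀ x : {x : G // x ∈ T}, α (F x).1 = x.1 := fun x =>
    (hsur x.1 x.2).choose_spec.2
  have hiter : ∀ (x : {x : G // x ∈ T}) (a c : ℕ),
      iterHom α a ((F^[a + c] x).1) = (F^[c] x).1 := by
    intro x a
    induction a with
    | zero => intro c; rw [iterHom_zero_apply, Nat.zero_add]
    | succ a ih =>
        intro c
        have h1 : a + 1 + c = (a + c) + 1 := by omega
        rw [h1, iterHom_succ_apply' α a, Function.iterate_succ_apply' F (a + c) x, hF]
        exact ih c
  have hwmem : iterHom α (n + 1) u ∈ (Uplus α U : Set G) * (Uminus α U : Set G) := by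
    rw [← hTA]; exact hw
  obtain ⟨p, hp, q, hq, hpq⟩ := Set.mem_mul.1 hwmem
  set N : ℕ := n + 1 with hN
  set sP : {x : G // x ∈ T} := ⟨p, hp⟩ with hsP
  set uP : {x : G // x ∈ T} := ⟨u, hu⟩ with huP
  set u' : G := ((F^[m₀ + N] sP).1)⁻¹ * (F^[m₀] uP).1 with hu'
  have hu'T : u' ∈ T := T.mul_mem (T.inv_mem (F^[m₀ + N] sP).2) (F^[m₀] uP).2
  have hu'U : u' ∈ U := Uplus_le hu'T
  have hstep1 : iterHom α (m₀ + N) u' = q := by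
    have e1 : iterHom α (m₀ + N) ((F^[m₀ + N] sP).1) = p := by
      have := hiter sP (m₀ + N) 0
      rwa [Nat.add_zero, Function.iterate_zero_apply] at this
    have e2 : iterHom α (m₀ + N) ((F^[m₀] uP).1) = iterHom α N u := by
      have h3 : m₀ + N = N + m₀ := by omega
      rw [h3, iterHom_add_apply]
      congr 1
      have := hiter uP m₀ 0
      rwa [Nat.add_zero, Function.iterate_zero_apply] at this
    rw [hu', map_mul, map_inv, e1, e2, ← hpq]
    group
  have hu'Umm : u' ∈ Umm α U := mem_Umm_of (m₀ + N) (by rw [hstep1]; exact hq)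
  have hkey : iterHom α m₀ u' ∈ Uminus α U := hm₀ u' hu'U hu'Umm
  have hstep2 : iterHom α (m₀ + 1) u' = ((F^[n] sP).1)⁻¹ * α u := by
    have e1 : iterHom α (m₀ + 1) ((F^[m₀ + N] sP).1) = (F^[n] sP).1 := by
      have h3 : m₀ + N = (m₀ + 1) + n := by omega
      rw [h3]
      exact hiter sP (m₀ + 1) n
    have e2 : iterHom α (m₀ + 1) ((F^[m₀] uP).1) = α u := by
      have h3 : m₀ + 1 = 1 + m₀ := by omega
      rw [h3, iterHom_add_apply]
      have h4 : iterHom α m₀ ((F^[m₀] uP).1) = u := by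
        have := hiter uP m₀ 0
        rwa [Nat.add_zero, Function.iterate_zero_apply] at this
      rw [h4, iterHom_one]
    rw [hu', map_mul, map_inv, e1, e2]
  have h5 : iterHom α (m₀ + 1) u' ∈ U := by
    rw [iterHom_succ_apply]
    have := Uminus_le_comap (α := α) (U := U) 1 hkey
    rw [Subgroup.mem_comap, iterHom_one] at this
    exact this
  have h6 : α u = (F^[n] sP).1 * iterHom α (m₀ + 1) u' := by
    rw [hstep2, mul_inv_cancel_left]
  rw [h6]
  exact U.mul_mem (Uplus_le (F^[n] sP).2) h5

/-- If `u ∈ U₊` and `αⁿ u ∈ U` then `αⁿ u ∈ U₊`. -/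
lemma crux (hα : Continuous α) (hc : IsCompact (U : Set G))
    (hTA : TidyAbove α U) (hTB : TidyBelow α U) :
    ∀ (n : ℕ) (x : G), x ∈ Uplus α U → iterHom α n x ∈ U → iterHom α n x ∈ Uplus α U := by
  intro n
  induction n with
  | zero => intro x hx _; rwa [iterHom_zero_apply]
  | succ n ih =>
      intro x hx hnx
      have hax : α x ∈ U := no_escape hα hc hTA hTB hx hnx
      have haxT : α x ∈ Uplus α U := Uplus_mem_of hax ⟨x, hx, rfl⟩
      rw [iterHom_succ_apply'] at hnx ⊢
      exact ih (α x) haxT hnx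

end NoEscape

/-! ### A relative-index lemma for product decompositions -/

section LemR
variable [Group G]

/-- If `U ⊆ T * B` with `T ≤ U`, `B ≤ A`, then `[U : A] = [T : A]` (relative indices). -/
lemma relindex_eq_of_mul_cover {T B A U : Subgroup G} (hTU : T ≤ U)
    (hcov : (U : Set G) ⊆ (T : Set G) * (B : Set G)) (hBA : B ≤ A) :
    A.relIndex U = A.relIndex T := by
  classical
  have h1 : A.relIndex U = Nat.card (U ⧸ A.subgroupOf U) := rfl
  have h2 : A.relIndex T = Nat.card (T ⧸ A.subgroupOf T) := rfl
  rw [h1, h2]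
  refine (Nat.card_congr (Equiv.ofBijective ?_ ⟨?_, ?_⟩)).symm
  · exact Quotient.map' (fun x => Subgroup.inclusion hTU x) (by
      intro a b hab
      rw [QuotientGroup.leftRel_apply] at hab ⊢
      rw [Subgroup.mem_subgroupOf] at hab ⊢
      simpa using hab)
  · intro x y
    induction x using Quotient.inductionOn' with
    | h a =>
    induction y using Quotient.inductionOn' with
    | h b =>
    simp only [Quotient.map'_mk'']
    intro h
    have h' := Quotient.eq''.1 h
    rw [QuotientGroup.leftRel_apply, Subgroup.mem_subgroupOf] at h'
    apply Quotient.sound'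
    rw [QuotientGroup.leftRel_apply, Subgroup.mem_subgroupOf]
    simpa using h'
  · intro y
    induction y using Quotient.inductionOn' with
    | h u =>
    obtain ⟨t, ht, b, hb, htb⟩ := Set.mem_mul.1 (hcov u.2)
    refine ⟨Quotient.mk'' ⟨t, ht⟩, ?_⟩
    simp only [Quotient.map'_mk'']
    apply Quotient.sound'
    rw [QuotientGroup.leftRel_apply, Subgroup.mem_subgroupOf]
    have hval : ((Subgroup.inclusion hTU ⟨t, ht⟩ : U) : G) = t := rfl
    have hcoe : (((Subgroup.inclusion hTU ⟨t, ht⟩)⁻¹ * u : U) : G) = t⁻¹ * (u : G) := by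
      push_cast [hval]
      rfl
    rw [hcoe]
    have hb' : t⁻¹ * (u : G) = b := by rw [← htb]; group
    rw [hb']
    exact hBA hb

end LemR

/-! ### Multiplicativity of the index for tidy subgroups -/

section Mult
variable [Group G] [TopologicalSpace G] [IsTopologicalGroup G] [T2Space G]
variable {α : G →* G} {U : Subgroup G}

lemma tidy_relIndex_pow (hα : Continuous α) (hc : IsCompact (U : Set G))
    (hTA : TidyAbove α U) (hTB : TidyBelow α U) (n : ℕ) :
    (Subgroup.comap (iterHom α n) U).relIndex U
      = ((Subgroup.comap (iterHom α 1) U).relIndex U) ^ n := by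
  classical
  set T := Uplus α U with hT
  have hTU : T ≤ U := Uplus_le
  have hcov : (U : Set G) ⊆ (Uplus α U : Set G) * (Uminus α U : Set G) := hTA.le
  have hred : ∀ m : ℕ, (Subgroup.comap (iterHom α m) U).relIndex U
      = (Subgroup.comap (iterHom α m) U).relIndex T :=
    fun m => relindex_eq_of_mul_cover hTU hcov (Uminus_le_comap m)
  have hinf : ∀ m : ℕ, Subgroup.comap (iterHom α m) U ⊓ T
      = Subgroup.comap (iterHom α m) T ⊓ T := by
    intro m
    ext x
    simp only [Subgroup.mem_inf, Subgroup.mem_comap]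
    constructor
    · rintro ⟨hxm, hxT⟩
      exact ⟨crux hα hc hTA hTB m x hxT hxm, hxT⟩
    · rintro ⟨hxm, hxT⟩
      exact ⟨hTU hxm, hxT⟩
  have h3 : ∀ m : ℕ, (Subgroup.comap (iterHom α m) U).relIndex T
      = (Subgroup.comap (iterHom α m) T).relIndex T := by
    intro m
    rw [← Subgroup.inf_relIndex_right (Subgroup.comap (iterHom α m) U) T, hinf m,
      Subgroup.inf_relIndex_right]
  set S : Subgroup G := Subgroup.comap α T ⊓ T with hS
  have hmapS : Subgroup.map α S = T := by
    apply le_antisymm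
    · rintro y hy
      obtain ⟨x, hx, rfl⟩ := Subgroup.mem_map.1 hy
      exact (Subgroup.mem_comap.1 hx.1)
    · intro t ht
      obtain ⟨s, hsT, hsa⟩ := Uplus_surj hα hc t ht
      exact Subgroup.mem_map.2 ⟨s, ⟨Subgroup.mem_comap.2 (by rw [hsa]; exact ht), hsT⟩, hsa⟩
  have hchain : ∀ m : ℕ, Subgroup.comap (iterHom α (m + 1)) T ⊓ T ≤ S := by
    intro m x hx
    obtain ⟨hx1, hx2⟩ := Subgroup.mem_inf.1 hx
    rw [Subgroup.mem_comap] at hx1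
    have hax : α x ∈ U := no_escape hα hc hTA hTB hx2 (hTU hx1)
    have haxT : α x ∈ T := Uplus_mem_of hax ⟨x, hx2, rfl⟩
    exact ⟨Subgroup.mem_comap.2 haxT, hx2⟩
  have hrec : ∀ m : ℕ, (Subgroup.comap (iterHom α (m + 1)) T).relIndex T
      = (Subgroup.comap (iterHom α m) T).relIndex T * (Subgroup.comap α T).relIndex T := by
    intro m
    set Tm := Subgroup.comap (iterHom α m) T with hTm
    set Tm1 := Subgroup.comap (iterHom α (m + 1)) T with hTm1
    have hcomapTm1 : Subgroup.comap α Tm = Tm1 := by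
      rw [hTm, hTm1, Subgroup.comap_comap, ← iterHom_succ']
    have hHK : Tm1 ⊓ T ≤ S := hchain m
    have hKT : S ≤ T := inf_le_right
    have hmul := Subgroup.relIndex_mul_relIndex (Tm1 ⊓ T) S T hHK hKT
    have e1 : (Tm1 ⊓ T).relIndex T = Tm1.relIndex T := Subgroup.inf_relIndex_right _ _
    have e2 : S.relIndex T = (Subgroup.comap α T).relIndex T := Subgroup.inf_relIndex_right _ _
    have e3 : (Tm1 ⊓ T).relIndex S = Tm.relIndex T := by
      have hinter : (Tm1 ⊓ T) ⊓ S = (Tm1 ⊓ Subgroup.comap α T) ⊓ S := by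
        ext x
        simp only [Subgroup.mem_inf, hS]
        tauto
      have hA : Tm1 ⊓ Subgroup.comap α T = Subgroup.comap α (Tm ⊓ T) := by
        rw [Subgroup.comap_inf, hcomapTm1]
      calc (Tm1 ⊓ T).relIndex S = ((Tm1 ⊓ T) ⊓ S).relIndex S :=
              (Subgroup.inf_relIndex_right _ _).symm
        _ = ((Tm1 ⊓ Subgroup.comap α T) ⊓ S).relIndex S := by rw [hinter]
        _ = (Tm1 ⊓ Subgroup.comap α T).relIndex S := Subgroup.inf_relIndex_right _ _
        _ = (Subgroup.comap α (Tm ⊓ T)).relIndex S := by rw [hA]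
        _ = (Tm ⊓ T).relIndex (Subgroup.map α S) := Subgroup.relIndex_comap (Tm ⊓ T) α S
        _ = (Tm ⊓ T).relIndex T := by rw [hmapS]
        _ = Tm.relIndex T := Subgroup.inf_relIndex_right _ _
    rw [e1, e2, e3] at hmul
    exact hmul.symm
  have hTpow : ∀ m : ℕ, (Subgroup.comap (iterHom α m) T).relIndex T
      = ((Subgroup.comap α T).relIndex T) ^ m := by
    intro m
    induction m with
    | zero =>
        rw [iterHom_zero, Subgroup.comap_id, Subgroup.relIndex_self, pow_zero]
    | succ m ih => rw [hrec m, ih, pow_succ]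
  have hbase : (Subgroup.comap (iterHom α 1) U).relIndex U
      = (Subgroup.comap α T).relIndex T := by
    rw [hred 1, h3 1, iterHom_one]
  rw [hred n, h3 n, hTpow n, hbase]

end Mult

/-! ### Comparison bounds -/

section Compare
variable [Group G] [TopologicalSpace G] [IsTopologicalGroup G] [T2Space G]
variable {α : G →* G} {U : Subgroup G}

lemma relindex_ne_zero_of_isOpen_of_isCompact {H K : Subgroup G} (hH : IsOpen (H : Set G))
    (hK : IsCompact (K : Set G)) : H.relIndex K ≠ 0 := by
  haveI : CompactSpace K := isCompact_iff_compactSpace.mp hK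
  haveI : Finite (K ⧸ H.subgroupOf K) := by
    apply Subgroup.quotient_finite_of_isOpen
    exact hH.preimage continuous_subtype_val
  exact Subgroup.index_ne_zero_of_finite

lemma compare_bounds (hα : Continuous α) (hc : IsCompact (U : Set G)) (ho : IsOpen (U : Set G))
    (hTA : TidyAbove α U) (hTB : TidyBelow α U) {V : Subgroup G} (hVU : V ≤ U)
    (hVo : IsOpen (V : Set G)) (n : ℕ) :
    (Subgroup.comap (iterHom α n) V).relIndex V
        ≤ V.relIndex U * ((Subgroup.comap α U).relIndex U) ^ n ∧
    ((Subgroup.comap α U).relIndex U) ^ n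
        ≤ V.relIndex U * (Subgroup.comap (iterHom α n) V).relIndex V := by
  classical
  set Wn := Subgroup.comap (iterHom α n) V with hWn
  set Xn := Subgroup.comap (iterHom α n) U with hXn
  set k := V.relIndex U with hk
  set d := (Subgroup.comap α U).relIndex U with hd
  have hXnco : (Xn : Set G) = iterHom α n ⁻¹' (U : Set G) := rfl
  have hWnco : (Wn : Set G) = iterHom α n ⁻¹' (V : Set G) := rfl
  have hXopen : IsOpen (Xn : Set G) := by
    rw [hXnco]; exact ho.preimage (continuous_iterHom α hα n)
  have hWopen : IsOpen (Wn : Set G) := by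
    rw [hWnco]; exact hVo.preimage (continuous_iterHom α hα n)
  have hk0 : k ≠ 0 := relindex_ne_zero_of_isOpen_of_isCompact hVo hc
  have hd0 : d ≠ 0 := by
    have hop : IsOpen ((Subgroup.comap α U : Subgroup G) : Set G) := by
      have : ((Subgroup.comap α U : Subgroup G) : Set G) = α ⁻¹' (U : Set G) := rfl
      rw [this]; exact ho.preimage hα
    exact relindex_ne_zero_of_isOpen_of_isCompact hop hc
  have hXnU : Xn.relIndex U = d ^ n := by
    rw [hXn, tidy_relIndex_pow hα hc hTA hTB n, iterHom_one, hd]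
  have hdn0 : Xn.relIndex U ≠ 0 := by rw [hXnU]; exact pow_ne_zero _ hd0
  have hWXle : Wn ≤ Xn := Subgroup.comap_mono hVU
  constructor
  · have h1 : Wn ⊓ V ≤ Xn ⊓ V := inf_le_inf hWXle le_rfl
    have h2 : Xn ⊓ V ≤ V := inf_le_right
    have b1 : (Xn ⊓ V).relIndex V ≤ d ^ n := by
      rw [Subgroup.inf_relIndex_right, ← hXnU]
      exact Subgroup.relIndex_le_of_le_right hVU hdn0
    have b2 : (Wn ⊓ V).relIndex (Xn ⊓ V) ≤ k := by
      have hinter : (Wn ⊓ V) ⊓ (Xn ⊓ V) = Wn ⊓ (Xn ⊓ V) := by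
        ext x; simp only [Subgroup.mem_inf]; tauto
      have e : (Wn ⊓ V).relIndex (Xn ⊓ V) = Wn.relIndex (Xn ⊓ V) := by
        rw [← Subgroup.inf_relIndex_right (Wn ⊓ V) (Xn ⊓ V), hinter,
          Subgroup.inf_relIndex_right]
      rw [e, hWn, Subgroup.relIndex_comap V (iterHom α n) (Xn ⊓ V)]
      have hmap : Subgroup.map (iterHom α n) (Xn ⊓ V) ≤ U :=
        Subgroup.map_le_iff_le_comap.2 (le_trans inf_le_left (le_of_eq hXn))
      exact Subgroup.relIndex_le_of_le_right hmap hk0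
    calc Wn.relIndex V = (Wn ⊓ V).relIndex V := (Subgroup.inf_relIndex_right _ _).symm
      _ = (Wn ⊓ V).relIndex (Xn ⊓ V) * (Xn ⊓ V).relIndex V :=
          (Subgroup.relIndex_mul_relIndex _ _ _ h1 h2).symm
      _ ≤ k * d ^ n := Nat.mul_le_mul b2 b1
  · have hWVo : IsOpen ((Wn ⊓ V : Subgroup G) : Set G) := by
      rw [Subgroup.coe_inf]; exact hWopen.inter hVo
    have hne : (Wn ⊓ V).relIndex U ≠ 0 := relindex_ne_zero_of_isOpen_of_isCompact hWVo hc
    have hle : Wn ⊓ V ≤ Xn := le_trans inf_le_left hWXle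
    calc d ^ n = Xn.relIndex U := hXnU.symm
      _ ≤ (Wn ⊓ V).relIndex U := Subgroup.relIndex_le_of_le_left hle hne
      _ = (Wn ⊓ V).relIndex V * V.relIndex U :=
          (Subgroup.relIndex_mul_relIndex _ _ _ inf_le_right hVU).symm
      _ = k * Wn.relIndex V := by rw [Subgroup.inf_relIndex_right, mul_comm]

end Compare

/-- Orbit bounds: with `V = U⁽¹⁾ ∩ U⁽²⁾`, `kᵢ = [U⁽ⁱ⁾ : V]`, and
`dᵢ = [U⁽ⁱ⁾ : U⁽ⁱ⁾ ∩ α⁻¹(U⁽ⁱ⁾)]`, one has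
`[V : V ∩ α^{-n}(V)] ≤ kᵢ · dᵢⁿ` and `dᵢⁿ ≤ kᵢ · [V : V ∩ α^{-n}(V)]` for all `n`;
moreover if `{α^{-i}(V)}` is finite then `d₁ = 1 = d₂`. -/
theorem orbit_bounds [Group G] [TopologicalSpace G] [IsTopologicalGroup G]
    [TotallyDisconnectedSpace G] [LocallyCompactSpace G]
    (α : G →* G) (hα : Continuous α)
    (U₁ U₂ : Subgroup G)
    (hU₁c : IsCompact (U₁ : Set G)) (hU₁o : IsOpen (U₁ : Set G)) (hU₁ : Tidy α U₁)
    (hU₂c : IsCompact (U₂ : Set G)) (hU₂o : IsOpen (U₂ : Set G)) (hU₂ : Tidy α U₂)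
    (V : Subgroup G) (hV : V = U₁ ⊓ U₂)
    (k₁ k₂ d₁ d₂ : ℕ)
    (hk₁ : k₁ = Subgroup.relIndex V U₁) (hk₂ : k₂ = Subgroup.relIndex V U₂)
    (hd₁ : d₁ = Subgroup.relIndex (Subgroup.comap α U₁) U₁)
    (hd₂ : d₂ = Subgroup.relIndex (Subgroup.comap α U₂) U₂) :
    (∀ n : ℕ,
      Subgroup.relIndex (Subgroup.comap (iterHom α n) V) V ≤ k₁ * d₁ ^ n ∧
      d₁ ^ n ≤ k₁ * Subgroup.relIndex (Subgroup.comap (iterHom α n) V) V ∧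
      Subgroup.relIndex (Subgroup.comap (iterHom α n) V) V ≤ k₂ * d₂ ^ n ∧
      d₂ ^ n ≤ k₂ * Subgroup.relIndex (Subgroup.comap (iterHom α n) V) V) ∧
    ((Set.range fun n : ℕ => Subgroup.comap (iterHom α n) V).Finite →
      d₁ = 1 ∧ d₂ = 1) := by
  haveI hT2 : T2Space G := by
    refine IsTopologicalGroup.t2Space_iff_one_closed.mpr ?_
    rw [← connectedComponent_eq_singleton (1 : G)]
    exact isClosed_connectedComponent
  have hVU₁ : V ≤ U₁ := by rw [hV]; exact inf_le_left
  have hVU₂ : V ≤ U₂ := by rw [hV]; exact inf_le_right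
  have hVo : IsOpen (V : Set G) := by
    rw [hV, Subgroup.coe_inf]; exact hU₁o.inter hU₂o
  have hbounds₁ := fun n => compare_bounds hα hU₁c hU₁o hU₁.1 hU₁.2 hVU₁ hVo n
  have hbounds₂ := fun n => compare_bounds hα hU₂c hU₂o hU₂.1 hU₂.2 hVU₂ hVo n
  subst hk₁ hk₂ hd₁ hd₂
  constructor
  · intro n
    exact ⟨(hbounds₁ n).1, (hbounds₁ n).2, (hbounds₂ n).1, (hbounds₂ n).2⟩
  · intro hfin
    have hfinrel : (Set.range fun n : ℕ =>
        Subgroup.relIndex (Subgroup.comap (iterHom α n) V) V).Finite := by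
      have h := hfin.image (fun H : Subgroup G => H.relIndex V)
      refine h.subset ?_
      rintro _ ⟨n, rfl⟩
      exact ⟨Subgroup.comap (iterHom α n) V, ⟨n, rfl⟩, rfl⟩
    obtain ⟨C, hC⟩ := hfinrel.bddAbove
    have hCb : ∀ n : ℕ, Subgroup.relIndex (Subgroup.comap (iterHom α n) V) V ≤ C :=
      fun n => hC ⟨n, rfl⟩
    have key : ∀ (U : Subgroup G), IsCompact (U : Set G) → IsOpen (U : Set G) →
        (∀ n : ℕ, (Subgroup.relIndex (Subgroup.comap α U) U) ^ n
          ≤ V.relIndex U * Subgroup.relIndex (Subgroup.comap (iterHom α n) V) V) →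
        Subgroup.relIndex (Subgroup.comap α U) U = 1 := by
      intro U hc ho hb
      set d := Subgroup.relIndex (Subgroup.comap α U) U with hdd
      have hd0 : d ≠ 0 := by
        have hop : IsOpen ((Subgroup.comap α U : Subgroup G) : Set G) := by
          have : ((Subgroup.comap α U : Subgroup G) : Set G) = α ⁻¹' (U : Set G) := rfl
          rw [this]; exact ho.preimage hα
        exact relindex_ne_zero_of_isOpen_of_isCompact hop hc
      by_contra hne
      have hd2 : 2 ≤ d := by omega
      set M := V.relIndex U * C with hM
      have hdM : ∀ n : ℕ, d ^ n ≤ M := by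
        intro n
        calc d ^ n ≤ V.relIndex U * Subgroup.relIndex (Subgroup.comap (iterHom α n) V) V :=
              hb n
          _ ≤ V.relIndex U * C := Nat.mul_le_mul_left _ (hCb n)
      have hlt : M < d ^ M := by
        calc M < 2 ^ M := Nat.lt_two_pow_self
          _ ≤ d ^ M := Nat.pow_le_pow_left hd2 M
      exact absurd (hdM M) (not_le.mpr hlt)
    exact ⟨key U₁ hU₁c hU₁o (fun n => (hbounds₁ n).2),
      key U₂ hU₂c hU₂o (fun n => (hbounds₂ n).2)⟩
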